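/- With notation as above, the common vanishing locus of n_0,...,n_4 equals the vanishing locus of the elementary symmetric polynomials e_2 and e_3 in u0,...,u4: that is, for a point (u0,...,u4) ∈ ℂ^5, n_i = 0 for all i ∈ {0,...,4} if and only if e_2(u) = 0 and e_3(u) = 0. -/
import Mathlib


/-- Elementary symmetric polynomial of degree `m` of the values of `u` on a finite set. -/
noncomputable def esym5 (u : Fin 5 → ℂ) (s : Finset (Fin 5)) (m : ℕ) : ℂ :=
  ∑ t ∈ s.powersetCard m, ∏ j ∈ t, u j

/-- `n_i = e₂(i)² - e₁(i)e₃(i)`. -/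
noncomputable def npart (u : Fin 5 → ℂ) (i : Fin 5) : ℂ :=
  (esym5 u {i}ᶜ 2)^2 - esym5 u {i}ᶜ 1 * esym5 u {i}ᶜ 3

lemma eC0_1 (u : Fin 5 → ℂ) : esym5 u ({0}ᶜ) 1 = u 1 + u 2 + u 3 + u 4 := by
  rw [esym5, show (({0}ᶜ) : Finset (Fin 5)).powersetCard 1 = {{1},{2},{3},{4}} from by decide]
  simp +decide [Finset.sum_insert, Finset.prod_insert]
  ring

lemma eC0_2 (u : Fin 5 → ℂ) : esym5 u ({0}ᶜ) 2 = u 1*u 2 + u 1*u 3 + u 1*u 4 + u 2*u 3 + u 2*u 4 + u 3*u 4 := by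
  rw [esym5, show (({0}ᶜ) : Finset (Fin 5)).powersetCard 2 = {{1,2},{1,3},{1,4},{2,3},{2,4},{3,4}} from by decide]
  simp +decide [Finset.sum_insert, Finset.prod_insert]
  ring

lemma eC0_3 (u : Fin 5 → ℂ) : esym5 u ({0}ᶜ) 3 = u 1*u 2*u 3 + u 1*u 2*u 4 + u 1*u 3*u 4 + u 2*u 3*u 4 := by
  rw [esym5, show (({0}ᶜ) : Finset (Fin 5)).powersetCard 3 = {{1,2,3},{1,2,4},{1,3,4},{2,3,4}} from by decide]
  simp +decide [Finset.sum_insert, Finset.prod_insert]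
  ring

lemma eC1_1 (u : Fin 5 → ℂ) : esym5 u ({1}ᶜ) 1 = u 0 + u 2 + u 3 + u 4 := by
  rw [esym5, show (({1}ᶜ) : Finset (Fin 5)).powersetCard 1 = {{0},{2},{3},{4}} from by decide]
  simp +decide [Finset.sum_insert, Finset.prod_insert]
  ring

lemma eC1_2 (u : Fin 5 → ℂ) : esym5 u ({1}ᶜ) 2 = u 0*u 2 + u 0*u 3 + u 0*u 4 + u 2*u 3 + u 2*u 4 + u 3*u 4 := by
  rw [esym5, show (({1}ᶜ) : Finset (Fin 5)).powersetCard 2 = {{0,2},{0,3},{0,4},{2,3},{2,4},{3,4}} from by decide]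
  simp +decide [Finset.sum_insert, Finset.prod_insert]
  ring

lemma eC1_3 (u : Fin 5 → ℂ) : esym5 u ({1}ᶜ) 3 = u 0*u 2*u 3 + u 0*u 2*u 4 + u 0*u 3*u 4 + u 2*u 3*u 4 := by
  rw [esym5, show (({1}ᶜ) : Finset (Fin 5)).powersetCard 3 = {{0,2,3},{0,2,4},{0,3,4},{2,3,4}} from by decide]
  simp +decide [Finset.sum_insert, Finset.prod_insert]
  ring

lemma eC2_1 (u : Fin 5 → ℂ) : esym5 u ({2}ᶜ) 1 = u 0 + u 1 + u 3 + u 4 := by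
  rw [esym5, show (({2}ᶜ) : Finset (Fin 5)).powersetCard 1 = {{0},{1},{3},{4}} from by decide]
  simp +decide [Finset.sum_insert, Finset.prod_insert]
  ring

lemma eC2_2 (u : Fin 5 → ℂ) : esym5 u ({2}ᶜ) 2 = u 0*u 1 + u 0*u 3 + u 0*u 4 + u 1*u 3 + u 1*u 4 + u 3*u 4 := by
  rw [esym5, show (({2}ᶜ) : Finset (Fin 5)).powersetCard 2 = {{0,1},{0,3},{0,4},{1,3},{1,4},{3,4}} from by decide]
  simp +decide [Finset.sum_insert, Finset.prod_insert]
  ring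

lemma eC2_3 (u : Fin 5 → ℂ) : esym5 u ({2}ᶜ) 3 = u 0*u 1*u 3 + u 0*u 1*u 4 + u 0*u 3*u 4 + u 1*u 3*u 4 := by
  rw [esym5, show (({2}ᶜ) : Finset (Fin 5)).powersetCard 3 = {{0,1,3},{0,1,4},{0,3,4},{1,3,4}} from by decide]
  simp +decide [Finset.sum_insert, Finset.prod_insert]
  ring

lemma eC3_1 (u : Fin 5 → ℂ) : esym5 u ({3}ᶜ) 1 = u 0 + u 1 + u 2 + u 4 := by
  rw [esym5, show (({3}ᶜ) : Finset (Fin 5)).powersetCard 1 = {{0},{1},{2},{4}} from by decide]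
  simp +decide [Finset.sum_insert, Finset.prod_insert]
  ring

lemma eC3_2 (u : Fin 5 → ℂ) : esym5 u ({3}ᶜ) 2 = u 0*u 1 + u 0*u 2 + u 0*u 4 + u 1*u 2 + u 1*u 4 + u 2*u 4 := by
  rw [esym5, show (({3}ᶜ) : Finset (Fin 5)).powersetCard 2 = {{0,1},{0,2},{0,4},{1,2},{1,4},{2,4}} from by decide]
  simp +decide [Finset.sum_insert, Finset.prod_insert]
  ring

lemma eC3_3 (u : Fin 5 → ℂ) : esym5 u ({3}ᶜ) 3 = u 0*u 1*u 2 + u 0*u 1*u 4 + u 0*u 2*u 4 + u 1*u 2*u 4 := by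
  rw [esym5, show (({3}ᶜ) : Finset (Fin 5)).powersetCard 3 = {{0,1,2},{0,1,4},{0,2,4},{1,2,4}} from by decide]
  simp +decide [Finset.sum_insert, Finset.prod_insert]
  ring

lemma eC4_1 (u : Fin 5 → ℂ) : esym5 u ({4}ᶜ) 1 = u 0 + u 1 + u 2 + u 3 := by
  rw [esym5, show (({4}ᶜ) : Finset (Fin 5)).powersetCard 1 = {{0},{1},{2},{3}} from by decide]
  simp +decide [Finset.sum_insert, Finset.prod_insert]
  ring

lemma eC4_2 (u : Fin 5 → ℂ) : esym5 u ({4}ᶜ) 2 = u 0*u 1 + u 0*u 2 + u 0*u 3 + u 1*u 2 + u 1*u 3 + u 2*u 3 := by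
  rw [esym5, show (({4}ᶜ) : Finset (Fin 5)).powersetCard 2 = {{0,1},{0,2},{0,3},{1,2},{1,3},{2,3}} from by decide]
  simp +decide [Finset.sum_insert, Finset.prod_insert]
  ring

lemma eC4_3 (u : Fin 5 → ℂ) : esym5 u ({4}ᶜ) 3 = u 0*u 1*u 2 + u 0*u 1*u 3 + u 0*u 2*u 3 + u 1*u 2*u 3 := by
  rw [esym5, show (({4}ᶜ) : Finset (Fin 5)).powersetCard 3 = {{0,1,2},{0,1,3},{0,2,3},{1,2,3}} from by decide]
  simp +decide [Finset.sum_insert, Finset.prod_insert]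
  ring

lemma eU2 (u : Fin 5 → ℂ) : esym5 u Finset.univ 2 = u 0*u 1 + u 0*u 2 + u 0*u 3 + u 0*u 4 + u 1*u 2 + u 1*u 3 + u 1*u 4 + u 2*u 3 + u 2*u 4 + u 3*u 4 := by
  rw [esym5, show (Finset.univ : Finset (Fin 5)).powersetCard 2 = {{0,1},{0,2},{0,3},{0,4},{1,2},{1,3},{1,4},{2,3},{2,4},{3,4}} from by decide]
  simp +decide [Finset.sum_insert, Finset.prod_insert]
  ring

lemma eU3 (u : Fin 5 → ℂ) : esym5 u Finset.univ 3 = u 0*u 1*u 2 + u 0*u 1*u 3 + u 0*u 1*u 4 + u 0*u 2*u 3 + u 0*u 2*u 4 + u 0*u 3*u 4 + u 1*u 2*u 3 + u 1*u 2*u 4 + u 1*u 3*u 4 + u 2*u 3*u 4 := by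
  rw [esym5, show (Finset.univ : Finset (Fin 5)).powersetCard 3 = {{0,1,2},{0,1,3},{0,1,4},{0,2,3},{0,2,4},{0,3,4},{1,2,3},{1,2,4},{1,3,4},{2,3,4}} from by decide]
  simp +decide [Finset.sum_insert, Finset.prod_insert]
  ring

/-- The common vanishing locus of `n₀,…,n₄` equals `V(e₂, e₃)`:
for `u ∈ ℂ⁵`, all `n_i` vanish iff the elementary symmetric polynomials `e₂` and `e₃`
in `u₀,…,u₄` vanish. -/
theorem npart_vanishing_iff (u : Fin 5 → ℂ) :
    (∀ i, npart u i = 0) ↔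
      (esym5 u Finset.univ 2 = 0 ∧ esym5 u Finset.univ 3 = 0) := by
  constructor
  · intro h
    have h0 : (u 1*u 2 + u 1*u 3 + u 1*u 4 + u 2*u 3 + u 2*u 4 + u 3*u 4)^2 - (u 1 + u 2 + u 3 + u 4) * (u 1*u 2*u 3 + u 1*u 2*u 4 + u 1*u 3*u 4 + u 2*u 3*u 4) = 0 := by
      have := h 0; rwa [npart, eC0_2, eC0_1, eC0_3] at this
    have h1 : (u 0*u 2 + u 0*u 3 + u 0*u 4 + u 2*u 3 + u 2*u 4 + u 3*u 4)^2 - (u 0 + u 2 + u 3 + u 4) * (u 0*u 2*u 3 + u 0*u 2*u 4 + u 0*u 3*u 4 + u 2*u 3*u 4) = 0 := by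
      have := h 1; rwa [npart, eC1_2, eC1_1, eC1_3] at this
    have h2 : (u 0*u 1 + u 0*u 3 + u 0*u 4 + u 1*u 3 + u 1*u 4 + u 3*u 4)^2 - (u 0 + u 1 + u 3 + u 4) * (u 0*u 1*u 3 + u 0*u 1*u 4 + u 0*u 3*u 4 + u 1*u 3*u 4) = 0 := by
      have := h 2; rwa [npart, eC2_2, eC2_1, eC2_3] at this
    have h3 : (u 0*u 1 + u 0*u 2 + u 0*u 4 + u 1*u 2 + u 1*u 4 + u 2*u 4)^2 - (u 0 + u 1 + u 2 + u 4) * (u 0*u 1*u 2 + u 0*u 1*u 4 + u 0*u 2*u 4 + u 1*u 2*u 4) = 0 := by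
      have := h 3; rwa [npart, eC3_2, eC3_1, eC3_3] at this
    have h4 : (u 0*u 1 + u 0*u 2 + u 0*u 3 + u 1*u 2 + u 1*u 3 + u 2*u 3)^2 - (u 0 + u 1 + u 2 + u 3) * (u 0*u 1*u 2 + u 0*u 1*u 3 + u 0*u 2*u 3 + u 1*u 2*u 3) = 0 := by
      have := h 4; rwa [npart, eC4_2, eC4_1, eC4_3] at this
    rw [eU2, eU3]
    have k1 : (u 0*u 1 + u 0*u 2 + u 0*u 3 + u 0*u 4 + u 1*u 2 + u 1*u 3 + u 1*u 4 + u 2*u 3 + u 2*u 4 + u 3*u 4) * (u 0*u 1*u 2 + u 0*u 1*u 3 + u 0*u 1*u 4 + u 0*u 2*u 3 + u 0*u 2*u 4 + u 0*u 3*u 4 + u 1*u 2*u 3 + u 1*u 2*u 4 + u 1*u 3*u 4 + u 2*u 3*u 4) = 0 := by linear_combination (u 0) * h0 + (u 1) * h1 + (u 2) * h2 + (u 3) * h3 + (u 4) * h4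
    have k2 : 3*(u 0*u 1 + u 0*u 2 + u 0*u 3 + u 0*u 4 + u 1*u 2 + u 1*u 3 + u 1*u 4 + u 2*u 3 + u 2*u 4 + u 3*u 4)^2 - 4*(u 0 + u 1 + u 2 + u 3 + u 4)*(u 0*u 1*u 2 + u 0*u 1*u 3 + u 0*u 1*u 4 + u 0*u 2*u 3 + u 0*u 2*u 4 + u 0*u 3*u 4 + u 1*u 2*u 3 + u 1*u 2*u 4 + u 1*u 3*u 4 + u 2*u 3*u 4) = 0 := by linear_combination h0 + h1 + h2 + h3 + h4
    have k3 : 3*(u 0*u 1*u 2 + u 0*u 1*u 3 + u 0*u 1*u 4 + u 0*u 2*u 3 + u 0*u 2*u 4 + u 0*u 3*u 4 + u 1*u 2*u 3 + u 1*u 2*u 4 + u 1*u 3*u 4 + u 2*u 3*u 4)^2 - 4*(u 0*u 1*u 2*u 3 + u 0*u 1*u 2*u 4 + u 0*u 1*u 3*u 4 + u 0*u 2*u 3*u 4 + u 1*u 2*u 3*u 4)*(u 0*u 1 + u 0*u 2 + u 0*u 3 + u 0*u 4 + u 1*u 2 + u 1*u 3 + u 1*u 4 + u 2*u 3 + u 2*u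 4 + u 3*u 4) = 0 := by linear_combination (u 0)^2 * h0 + (u 1)^2 * h1 + (u 2)^2 * h2 + (u 3)^2 * h3 + (u 4)^2 * h4
    rcases mul_eq_zero.mp k1 with he | he
    · refine ⟨he, ?_⟩
      have hsq : (u 0*u 1*u 2 + u 0*u 1*u 3 + u 0*u 1*u 4 + u 0*u 2*u 3 + u 0*u 2*u 4 + u 0*u 3*u 4 + u 1*u 2*u 3 + u 1*u 2*u 4 + u 1*u 3*u 4 + u 2*u 3*u 4)^2 = 0 := by linear_combination (4*(u 0*u 1*u 2*u 3 + u 0*u 1*u 2*u 4 + u 0*u 1*u 3*u 4 + u 0*u 2*u 3*u 4 + u 1*u 2*u 3*u 4)/3)*he + (1/3)*k3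
      exact pow_eq_zero_iff two_ne_zero |>.mp hsq
    · refine ⟨?_, he⟩
      have hsq : (u 0*u 1 + u 0*u 2 + u 0*u 3 + u 0*u 4 + u 1*u 2 + u 1*u 3 + u 1*u 4 + u 2*u 3 + u 2*u 4 + u 3*u 4)^2 = 0 := by linear_combination (4*(u 0 + u 1 + u 2 + u 3 + u 4)/3)*he + (1/3)*k2
      exact pow_eq_zero_iff two_ne_zero |>.mp hsq
  · rintro ⟨he2, he3⟩ i
    rw [eU2] at he2
    rw [eU3] at he3
    fin_cases i
    · show npart u 0 = 0
      rw [npart, eC0_2, eC0_1, eC0_3]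
      linear_combination ((u 0*u 1 + u 0*u 2 + u 0*u 3 + u 0*u 4 + u 1*u 2 + u 1*u 3 + u 1*u 4 + u 2*u 3 + u 2*u 4 + u 3*u 4) - (u 0)*(u 1 + u 2 + u 3 + u 4))*he2 - (u 1 + u 2 + u 3 + u 4)*he3
    · show npart u 1 = 0
      rw [npart, eC1_2, eC1_1, eC1_3]
      linear_combination ((u 0*u 1 + u 0*u 2 + u 0*u 3 + u 0*u 4 + u 1*u 2 + u 1*u 3 + u 1*u 4 + u 2*u 3 + u 2*u 4 + u 3*u 4) - (u 1)*(u 0 + u 2 + u 3 + u 4))*he2 - (u 0 + u 2 + u 3 + u 4)*he3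
    · show npart u 2 = 0
      rw [npart, eC2_2, eC2_1, eC2_3]
      linear_combination ((u 0*u 1 + u 0*u 2 + u 0*u 3 + u 0*u 4 + u 1*u 2 + u 1*u 3 + u 1*u 4 + u 2*u 3 + u 2*u 4 + u 3*u 4) - (u 2)*(u 0 + u 1 + u 3 + u 4))*he2 - (u 0 + u 1 + u 3 + u 4)*he3
    · show npart u 3 = 0
      rw [npart, eC3_2, eC3_1, eC3_3]
      linear_combination ((u 0*u 1 + u 0*u 2 + u 0*u 3 + u 0*u 4 + u 1*u 2 + u 1*u 3 + u 1*u 4 + u 2*u 3 + u 2*u 4 + u 3*u 4) - (u 3)*(u 0 + u 1 + u 2 + u 4))*he2 - (u 0 + u 1 + u 2 + u 4)*he3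
    · show npart u 4 = 0
      rw [npart, eC4_2, eC4_1, eC4_3]
      linear_combination ((u 0*u 1 + u 0*u 2 + u 0*u 3 + u 0*u 4 + u 1*u 2 + u 1*u 3 + u 1*u 4 + u 2*u 3 + u 2*u 4 + u 3*u 4) - (u 4)*(u 0 + u 1 + u 2 + u 3))*he2 - (u 0 + u 1 + u 2 + u 3)*he3
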